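/- Let n ≥ 2 be an integer and let (a_1, a_2, …, a_n) be a non-decreasing sequence of non-negative integers with a_1 = 0, a_n = n−1, and a_i ≤ i−1 for all 1 ≤ i ≤ n. Then the number of labeled trees T on n vertices whose uncover sequence satisfies k_i(T) = a_i for all 1 ≤ i ≤ n is exactly ∏_{i=1}^{n−2} ( binom(i − a_i − 1, a_{i+1} − a_i − 1)·(i+1) + binom(i − a_i − 1, a_{i+1} − a_i) ), where binomial coefficients with negative lower index are 0. -/

import Mathlib

/-!
Count more generally the *stages* of the uncovering process: a forest on the first `i` vertices
with uncover sequence `a_1, …, a_i`, together with one chosen root in each of its `i - a_i` trees.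
Uncovering vertex `i` turns a stage into a stage in exactly two ways, with `d = a_{i+1} - a_i`.
Either `i` becomes a new root whose children are `d` of the old roots (`C(i - a_i, d)` choices),
or `i` becomes a child of one of the `i` old vertices `x₀` and the parent of `d - 1` roots of the
other trees (`i · C(i - a_i - 1, d - 1)` choices); the root of the merged tree is then the root of
`x₀`. Pascal's rule turns the sum into the factor of the product. Finally, a tree with the whole
sequence is the stage on all `n` vertices whose single root is the last vertex, and it arises from
a stage on `n - 1` vertices only by the first kind of step with all roots as children.
-/

open scoped Classical
open Filter Topology MeasureTheory

/-- The finite set of all labeled trees on vertex set `Fin n`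
(vertex `v : Fin n` carries label `v + 1 ∈ {1, …, n}`). -/
noncomputable def treeSet (n : ℕ) : Finset (SimpleGraph (Fin n)) :=
  Finset.univ.filter fun T => T.IsTree

/-- `uncoverEdges T j` is the number of edges of the subgraph of `T` induced by the
first `j` vertices (those with label `≤ j`, i.e. `Fin`-value `< j`);
this is `k_j(T)`, the number of uncovered edges after `j` uncover steps. -/
noncomputable def uncoverEdges {n : ℕ} (T : SimpleGraph (Fin n)) (j : ℕ) : ℕ :=
  (Finset.univ.filter fun p : Fin n × Fin n =>
    T.Adj p.1 p.2 ∧ p.1 < p.2 ∧ (p.2 : ℕ) < j).card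

/-- The subgraph (on the same vertex set) induced by the vertices with label `≤ k`:
the forest uncovered after `k` steps. -/
def restrictBelow {n : ℕ} (T : SimpleGraph (Fin n)) (k : ℕ) : SimpleGraph (Fin n) where
  Adj v w := T.Adj v w ∧ (v : ℕ) < k ∧ (w : ℕ) < k
  symm := ⟨fun _ _ ⟨h, hv, hw⟩ => ⟨h.symm, hw, hv⟩⟩
  loopless := ⟨fun v h => T.irrefl h.1⟩

/-- Binomial coefficient with an integer lower index; it is `0` for negative lower index. -/
def chooseZ (m : ℕ) (j : ℤ) : ℕ := if 0 ≤ j then m.choose j.toNat else 0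

open Finset

namespace SimpleGraph

variable {V : Type*}

def addStar (G : SimpleGraph V) (v : V) (N : Finset V) : SimpleGraph V where
  Adj x y := x ≠ y ∧ (G.Adj x y ∨ (x = v ∧ y ∈ N) ∨ (y = v ∧ x ∈ N))
  symm := ⟨fun _ _ ⟨hne, h⟩ => ⟨hne.symm, by tauto⟩⟩
  loopless := ⟨fun _ h => h.1 rfl⟩

variable {G : SimpleGraph V} {v : V} {N : Finset V}

@[simp]
lemma addStar_adj {x y : V} :
    (G.addStar v N).Adj x y ↔ x ≠ y ∧ (G.Adj x y ∨ (x = v ∧ y ∈ N) ∨ (y = v ∧ x ∈ N)) :=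
  Iff.rfl

lemma le_addStar : G ≤ G.addStar v N := fun _ _ h => ⟨G.ne_of_adj h, Or.inl h⟩

lemma addStar_adj_of_ne {x y : V} (hx : x ≠ v) (hy : y ≠ v) :
    (G.addStar v N).Adj x y ↔ G.Adj x y := by
  simp [hx, hy, and_iff_right_of_imp G.ne_of_adj]

lemma addStar_adj_center (hGv : ∀ y, ¬ G.Adj v y) (hvN : v ∉ N) {y : V} :
    (G.addStar v N).Adj v y ↔ y ∈ N := by
  constructor
  · rintro ⟨-, h | ⟨-, hy⟩ | ⟨rfl, hy⟩⟩
    exacts [(hGv y h).elim, hy, (hvN hy).elim]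
  · exact fun hy => ⟨fun h => hvN (h ▸ hy), Or.inr (Or.inl ⟨rfl, hy⟩)⟩

lemma addStar_adj_center_of_mem {z : V} (hz : z ∈ N) (hzv : z ≠ v) : (G.addStar v N).Adj z v :=
  ⟨hzv, Or.inr (Or.inr ⟨rfl, hz⟩)⟩

lemma addStar_eq_addStar_iff {G₁ G₂ : SimpleGraph V} {N₁ N₂ : Finset V}
    (hG₁ : ∀ y, ¬ G₁.Adj v y) (hG₂ : ∀ y, ¬ G₂.Adj v y) (hN₁ : v ∉ N₁) (hN₂ : v ∉ N₂) :
    G₁.addStar v N₁ = G₂.addStar v N₂ ↔ G₁ = G₂ ∧ N₁ = N₂ := by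
  refine ⟨fun h => ⟨?_, ?_⟩, fun ⟨hG, hN⟩ => hG ▸ hN ▸ rfl⟩
  · ext x y
    by_cases hx : x = v
    · subst hx
      simp [hG₁, hG₂]
    by_cases hy : y = v
    · subst hy
      simp [G₁.adj_comm _ y, G₂.adj_comm _ y, hG₁, hG₂]
    rw [← addStar_adj_of_ne (N := N₁) hx hy, h, addStar_adj_of_ne hx hy]
  · ext y
    rw [← addStar_adj_center hG₁ hN₁, h, addStar_adj_center hG₂ hN₂]

lemma edges_mem_edgeSet_of_notMem_support {x y : V} (p : (G.addStar v N).Walk x y)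
    (hv : v ∉ p.support) : ∀ e ∈ p.edges, e ∈ G.edgeSet := by
  intro e he
  induction e using Sym2.ind with
  | _ a b =>
    have ha : a ≠ v := fun h => hv (h ▸ p.fst_mem_support_of_mem_edges he)
    have hb : b ≠ v := fun h => hv (h ▸ p.snd_mem_support_of_mem_edges he)
    exact (addStar_adj_of_ne ha hb).mp (p.adj_of_mem_edges he)

lemma Reachable.addStar_center {y z : V} (h : G.Reachable y z) (hz : z ∈ N) (hvN : v ∉ N) :
    (G.addStar v N).Reachable y v :=
  (h.mono le_addStar).trans (addStar_adj_center_of_mem hz (ne_of_mem_of_not_mem hz hvN)).reachable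

lemma reachable_addStar_center_iff (hGv : ∀ y, ¬ G.Adj v y) (hvN : v ∉ N) {x : V}
    (hx : x ≠ v) : (G.addStar v N).Reachable x v ↔ ∃ z ∈ N, G.Reachable x z := by
  constructor
  · rintro ⟨p⟩
    -- a walk leaving the `G`-component of `x` must do so through an edge into `v`
    obtain ⟨d, -, ⟨hd₁, hxd⟩, hd₂⟩ :=
      p.exists_boundary_dart {y | y ≠ v ∧ G.Reachable x y} ⟨hx, .rfl⟩ (fun h => h.1 rfl)
    by_cases hdv : d.snd = v
    · have hadj := d.adj.symm
      rw [hdv, addStar_adj_center hGv hvN] at hadj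
      exact ⟨d.fst, hadj, hxd⟩
    · exact (hd₂ ⟨hdv, hxd.trans ((addStar_adj_of_ne hd₁ hdv).mp d.adj).reachable⟩).elim
  · rintro ⟨z, hz, hxz⟩
    exact hxz.addStar_center hz hvN

lemma reachable_addStar_iff_of_not_reachable_center {x y : V}
    (hxv : ¬ (G.addStar v N).Reachable x v) :
    (G.addStar v N).Reachable x y ↔ G.Reachable x y := by
  refine ⟨fun ⟨p⟩ => ?_, fun h => h.mono le_addStar⟩
  have hv : v ∉ p.support := fun hv => hxv ⟨p.takeUntil v hv⟩
  exact ⟨p.transfer G (edges_mem_edgeSet_of_notMem_support p hv)⟩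

lemma addStar_insert [DecidableEq V] {z : V} (hz : z ≠ v) :
    G.addStar v (insert z N) = G.addStar v N ⊔ edge v z := by
  ext x y
  simp only [addStar_adj, sup_adj, edge_adj, mem_insert]
  constructor
  · rintro ⟨hne, h⟩
    tauto
  · rintro (⟨hne, h⟩ | ⟨h, hne⟩)
    · tauto
    · refine ⟨hne, ?_⟩
      rcases h with ⟨rfl, rfl⟩ | ⟨rfl, rfl⟩ <;> tauto

lemma isAcyclic_addStar_iff [DecidableEq V] (hGv : ∀ y, ¬ G.Adj v y) (hvN : v ∉ N) :
    (G.addStar v N).IsAcyclic ↔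
      G.IsAcyclic ∧ (N : Set V).Pairwise fun z₁ z₂ => ¬ G.Reachable z₁ z₂ := by
  induction N using Finset.induction_on with
  | empty =>
    have : G.addStar v ∅ = G := by ext; simp [and_iff_right_of_imp G.ne_of_adj]
    simp [this]
  | insert z N hzN ih =>
    have hzv : z ≠ v := fun h => hvN (h ▸ mem_insert_self _ _)
    have hvN' : v ∉ N := fun h => hvN (mem_insert_of_mem h)
    rw [addStar_insert hzv, isAcyclic_sup_fromEdgeSet_iff, ih hvN', coe_insert,
      Set.pairwise_insert, reachable_comm, reachable_addStar_center_iff hGv hvN' hzv,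
      addStar_adj_center hGv hvN']
    have hzN' : ∀ b ∈ N, z ≠ b := fun b hb h => hzN (h ▸ hb)
    simp only [reachable_comm (u := z), hzv.symm, hzN, or_self, imp_false, not_exists, not_and,
      mem_coe, and_self]
    grind

def IsRootSet (G : SimpleGraph V) (S : Set V) (R : Finset V) : Prop :=
  ∀ x ∈ S, ∃! r, r ∈ R ∧ G.Reachable x r

namespace IsRootSet

variable {S : Set V} {R : Finset V}

lemma unique (hR : G.IsRootSet S R) {x r₁ r₂ : V} (hx : x ∈ S) (h₁ : r₁ ∈ R) (h₂ : r₂ ∈ R)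
    (hx₁ : G.Reachable x r₁) (hx₂ : G.Reachable x r₂) : r₁ = r₂ :=
  (hR x hx).unique ⟨h₁, hx₁⟩ ⟨h₂, hx₂⟩

lemma pairwise_not_reachable (hR : G.IsRootSet S R) (hRS : ↑R ⊆ S) :
    (R : Set V).Pairwise fun r₁ r₂ => ¬ G.Reachable r₁ r₂ :=
  fun _ h₁ _ h₂ hne h => hne (hR.unique (hRS h₁) h₁ h₂ .rfl h)

lemma card_filter_not_reachable (hR : G.IsRootSet S R) {x : V} [DecidablePred (G.Reachable x)]
    (hx : x ∈ S) :
    (R.filter fun r => ¬ G.Reachable x r).card = R.card - 1 := by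
  obtain ⟨r, ⟨hr, hxr⟩, hu⟩ := hR x hx
  have hone : R.filter (G.Reachable x) = {r} :=
    eq_singleton_iff_unique_mem.mpr ⟨mem_filter.mpr ⟨hr, hxr⟩,
      fun y hy => hu y (mem_filter.mp hy)⟩
  have := card_filter_add_card_filter_not (s := R) (G.Reachable x)
  rw [hone, card_singleton] at this
  omega

/-- Outside the component of `v`, roots of `G.addStar v N` and of `G` are the same thing. -/
lemma existsUnique_addStar_iff {x : V} (hxv : ¬ (G.addStar v N).Reachable x v)
    {R₁ R₂ : Finset V} (h : ∀ y, y ≠ v → y ∉ N → (y ∈ R₁ ↔ y ∈ R₂)) :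
    (∃! r, r ∈ R₁ ∧ (G.addStar v N).Reachable x r) ↔ ∃! r, r ∈ R₂ ∧ G.Reachable x r := by
  refine existsUnique_congr fun r => ?_
  rw [reachable_addStar_iff_of_not_reachable_center hxv]
  refine and_congr_left fun hxr => ?_
  have hrv : r ≠ v := fun hrv => hxv (hrv ▸ hxr.mono le_addStar)
  exact h r hrv fun hrN =>
    hxv ((hxr.mono le_addStar).trans (addStar_adj_center_of_mem hrN hrv).reachable)

lemma disjoint_of_addStar_root (hvN : v ∉ N) {T : Set V} {R' : Finset V}
    (hR' : (G.addStar v N).IsRootSet T R') (hNT : ↑N ⊆ T) (hv : v ∈ R') : Disjoint R' N :=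
  Finset.disjoint_left.mpr fun _ hzR hzN => hvN <|
    hR'.unique (hNT hzN) hzR hv .rfl (Reachable.rfl.addStar_center hzN hvN) ▸ hzN

variable [DecidableEq V]

lemma addStar_root (hGv : ∀ y, ¬ G.Adj v y) (hvS : v ∉ S) (hRS : ↑R ⊆ S)
    (hR : G.IsRootSet S R) {P : Finset V} (hPR : P ⊆ R) :
    (G.addStar v P).IsRootSet (insert v S) (insert v (R \ P)) := by
  have hvP : v ∉ P := fun h => hvS (hRS (hPR h))
  have hRP : ∀ y ∈ R \ P, ¬ (G.addStar v P).Reachable y v := by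
    intro y hy hyv
    obtain ⟨hyR, hyP⟩ := mem_sdiff.mp hy
    obtain ⟨z, hzP, hyz⟩ :=
      (reachable_addStar_center_iff hGv hvP fun h => hvS (h ▸ hRS hyR)).mp hyv
    exact hyP (hR.unique (hRS hyR) hyR (hPR hzP) .rfl hyz ▸ hzP)
  intro x hx
  by_cases hxv : (G.addStar v P).Reachable x v
  · refine ⟨v, ⟨mem_insert_self _ _, hxv⟩, fun y ⟨hy, hxy⟩ => ?_⟩
    rcases mem_insert.mp hy with rfl | hy
    · rfl
    · exact (hRP y hy (hxy.symm.trans hxv)).elim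
  · have hxS : x ∈ S := (Set.mem_insert_iff.mp hx).resolve_left fun h => hxv (h ▸ .rfl)
    refine (existsUnique_addStar_iff hxv fun y hyv hyP => ?_).mpr (hR x hxS)
    simp [hyv, hyP]

lemma addStar_nonRoot (hGv : ∀ y, ¬ G.Adj v y) (hvS : v ∉ S)
    (hRS : ↑R ⊆ S) (hR : G.IsRootSet S R) {P : Finset V} (hPR : P ⊆ R) {x₀ : V} (hx₀ : x₀ ∈ S)
    (hx₀P : ∀ p ∈ P, ¬ G.Reachable x₀ p) :
    (G.addStar v (insert x₀ P)).IsRootSet (insert v S) (R \ P) := by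
  have hvN : v ∉ insert x₀ P := by
    rw [mem_insert]
    rintro (h | h)
    exacts [hvS (h ▸ hx₀), hvS (hRS (hPR h))]
  obtain ⟨r₀, ⟨hr₀, hx₀r₀⟩, -⟩ := hR x₀ hx₀
  have hvr₀ : (G.addStar v (insert x₀ P)).Reachable v r₀ :=
    (hx₀r₀.symm.addStar_center (mem_insert_self _ _) hvN).symm
  intro x hx
  by_cases hxv : (G.addStar v (insert x₀ P)).Reachable x v
  · refine ⟨r₀, ⟨mem_sdiff.mpr ⟨hr₀, fun h => hx₀P r₀ h hx₀r₀⟩, hxv.trans hvr₀⟩,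
      fun y ⟨hy, hxy⟩ => ?_⟩
    obtain ⟨hyR, hyP⟩ := mem_sdiff.mp hy
    obtain ⟨z, hz, hyz⟩ := (reachable_addStar_center_iff hGv hvN
      fun h => hvS (h ▸ hRS hyR)).mp (hxy.symm.trans hxv)
    rcases mem_insert.mp hz with rfl | hzP
    · exact hR.unique (hRS hyR) hyR hr₀ .rfl (hyz.trans hx₀r₀)
    · exact (hyP (hR.unique (hRS hyR) hyR (hPR hzP) .rfl hyz ▸ hzP)).elim
  · have hxS : x ∈ S := (Set.mem_insert_iff.mp hx).resolve_left fun h => hxv (h ▸ .rfl)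
    refine (existsUnique_addStar_iff hxv fun y hyv hyN => ?_).mpr (hR x hxS)
    simp only [mem_insert, not_or] at hyN
    simp [hyN.2]

lemma of_addStar_root (hGv : ∀ y, ¬ G.Adj v y) (hvN : v ∉ N) (hvS : v ∉ S)
    (hsep : (N : Set V).Pairwise fun z₁ z₂ => ¬ G.Reachable z₁ z₂) {R' : Finset V}
    (hR' : (G.addStar v N).IsRootSet (insert v S) R') (hv : v ∈ R') :
    G.IsRootSet S (R'.erase v ∪ N) := by
  intro x hx
  have hx' : x ∈ insert v S := Set.mem_insert_of_mem _ hx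
  by_cases hxv : (G.addStar v N).Reachable x v
  · obtain ⟨z, hz, hxz⟩ :=
      (reachable_addStar_center_iff hGv hvN fun h => hvS (h ▸ hx)).mp hxv
    refine ⟨z, ⟨mem_union_right _ hz, hxz⟩, fun y ⟨hy, hxy⟩ => ?_⟩
    rcases mem_union.mp hy with hy | hy
    · exact absurd (hR'.unique hx' (mem_of_mem_erase hy) hv (hxy.mono le_addStar) hxv)
        (ne_of_mem_erase hy)
    · exact hsep.eq hy hz (not_not_intro (hxy.symm.trans hxz))
  · refine (existsUnique_addStar_iff hxv fun y hyv hyN => ?_).mp (hR' x hx')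
    simp [hyv, hyN]

lemma of_addStar_nonRoot (hGv : ∀ y, ¬ G.Adj v y) (hvN : v ∉ N) (hvS : v ∉ S)
    (hsep : (N : Set V).Pairwise fun z₁ z₂ => ¬ G.Reachable z₁ z₂) {R' : Finset V}
    (hR' : (G.addStar v N).IsRootSet (insert v S) R') {r₀ x₀ : V} (hr₀ : r₀ ∈ R')
    (hx₀ : x₀ ∈ N) (hr₀x₀ : G.Reachable r₀ x₀) :
    G.IsRootSet S (R' ∪ N.erase x₀) := by
  have hvr₀ : (G.addStar v N).Reachable v r₀ := (hr₀x₀.addStar_center hx₀ hvN).symm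
  intro x hx
  have hx' : x ∈ insert v S := Set.mem_insert_of_mem _ hx
  by_cases hxv : (G.addStar v N).Reachable x v
  · obtain ⟨z, hz, hxz⟩ :=
      (reachable_addStar_center_iff hGv hvN fun h => hvS (h ▸ hx)).mp hxv
    by_cases hzx₀ : z = x₀
    · subst hzx₀
      refine ⟨r₀, ⟨mem_union_left _ hr₀, hxz.trans hr₀x₀.symm⟩, fun y ⟨hy, hxy⟩ => ?_⟩
      rcases mem_union.mp hy with hy | hy
      · exact hR'.unique hx' hy hr₀ (hxy.mono le_addStar) (hxv.trans hvr₀)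
      · exact absurd (hsep.eq (mem_of_mem_erase hy) hz (not_not_intro (hxy.symm.trans hxz)))
          (ne_of_mem_erase hy)
    · refine ⟨z, ⟨mem_union_right _ (mem_erase.mpr ⟨hzx₀, hz⟩), hxz⟩, fun y ⟨hy, hxy⟩ => ?_⟩
      rcases mem_union.mp hy with hy | hy
      · -- `y` would be the root of the component of `v`, which meets `N` only in `x₀`
        obtain rfl : y = r₀ := hR'.unique (Set.mem_insert _ _) hy hr₀
          ((hxy.symm.trans hxz).addStar_center hz hvN).symm hvr₀
        exact absurd (hsep.eq hz hx₀ (not_not_intro ((hxz.symm.trans hxy).trans hr₀x₀))) hzx₀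
      · exact hsep.eq (mem_of_mem_erase hy) hz (not_not_intro (hxy.symm.trans hxz))
  · refine (existsUnique_addStar_iff hxv fun y hyv hyN => ?_).mp (hR' x hx')
    simp [hyN]

lemma disjoint_erase_of_addStar_nonRoot (hvN : v ∉ N)
    (hsep : (N : Set V).Pairwise fun z₁ z₂ => ¬ G.Reachable z₁ z₂) {T : Set V} {R' : Finset V}
    (hR' : (G.addStar v N).IsRootSet T R') (hvT : v ∈ T) {r₀ x₀ : V} (hr₀ : r₀ ∈ R')
    (hx₀ : x₀ ∈ N) (hr₀x₀ : G.Reachable r₀ x₀) : Disjoint R' (N.erase x₀) := by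
  refine Finset.disjoint_left.mpr fun z hzR hz => ?_
  obtain ⟨hzx₀, hzN⟩ := mem_erase.mp hz
  obtain rfl : z = r₀ := hR'.unique hvT hzR hr₀ (Reachable.rfl.addStar_center hzN hvN).symm
    (hr₀x₀.addStar_center hx₀ hvN).symm
  exact hzx₀ (hsep.eq hzN hx₀ (not_not_intro hr₀x₀))

lemma eq_of_insert_eq_of_sdiff_eq {R₁ R₂ P₁ P₂ : Finset V} {x₁ x₂ : V}
    (hR₁ : G.IsRootSet S R₁) (hR₂ : G.IsRootSet S R₂) (hP₁ : P₁ ⊆ R₁) (hx₂ : x₂ ∈ S)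
    (hx₂P₂ : ∀ p ∈ P₂, ¬ G.Reachable x₂ p) (hins : insert x₁ P₁ = insert x₂ P₂)
    (hsdiff : R₁ \ P₁ = R₂ \ P₂) : x₁ = x₂ := by
  by_contra hne
  have hx₂P₁ : x₂ ∈ P₁ := by
    have := hins ▸ mem_insert_self x₂ P₂
    exact (mem_insert.mp this).resolve_left (Ne.symm hne)
  obtain ⟨r, ⟨hr, hx₂r⟩, -⟩ := hR₂ x₂ hx₂
  have hr' : r ∈ R₁ \ P₁ := hsdiff ▸ mem_sdiff.mpr ⟨hr, fun h => hx₂P₂ r h hx₂r⟩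
  obtain rfl : x₂ = r := hR₁.unique hx₂ (hP₁ hx₂P₁) (mem_sdiff.mp hr').1 .rfl hx₂r
  exact (mem_sdiff.mp hr').2 hx₂P₁

end IsRootSet

end SimpleGraph

open SimpleGraph

section Uncover

variable {n : ℕ} {G : SimpleGraph (Fin n)} {v : Fin n} {N : Finset (Fin n)}

lemma uncoverEdges_congr {H : SimpleGraph (Fin n)} {j : ℕ}
    (h : ∀ x y : Fin n, (x : ℕ) < j → (y : ℕ) < j → (G.Adj x y ↔ H.Adj x y)) :
    uncoverEdges G j = uncoverEdges H j := by
  unfold uncoverEdges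
  congr 1
  exact filter_congr fun p _ => and_congr_left fun ⟨hlt, hj⟩ => h _ _ (lt_trans hlt hj) hj

lemma uncoverEdges_addStar_of_le {j : ℕ} (hj : j ≤ v) :
    uncoverEdges (G.addStar v N) j = uncoverEdges G j :=
  uncoverEdges_congr fun _ _ hx hy =>
    addStar_adj_of_ne (Fin.ne_of_val_ne (by omega)) (Fin.ne_of_val_ne (by omega))

lemma uncoverEdges_addStar_succ (hG : ∀ ⦃x y⦄, G.Adj x y → (x : ℕ) < v)
    (hN : ∀ z ∈ N, (z : ℕ) < v) :
    uncoverEdges (G.addStar v N) (v + 1) = uncoverEdges G v + N.card := by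
  have hsplit : (univ.filter fun p : Fin n × Fin n =>
      (G.addStar v N).Adj p.1 p.2 ∧ p.1 < p.2 ∧ (p.2 : ℕ) < v + 1) =
      (univ.filter fun p : Fin n × Fin n => G.Adj p.1 p.2 ∧ p.1 < p.2 ∧ (p.2 : ℕ) < v) ∪
        N.image fun z => (z, v) := by
    ext ⟨x, y⟩
    simp only [mem_filter, mem_univ, true_and, mem_union, mem_image, Prod.mk.injEq, addStar_adj]
    constructor
    · rintro ⟨⟨-, h | ⟨rfl, hy⟩ | ⟨rfl, hx⟩⟩, hlt, -⟩
      · exact Or.inl ⟨h, hlt, hG h.symm⟩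
      · exact absurd (lt_trans hlt (hN y hy)) (lt_irrefl _)
      · exact Or.inr ⟨x, hx, rfl, rfl⟩
    · rintro (⟨h, hlt, hy⟩ | ⟨z, hz, rfl, rfl⟩)
      · exact ⟨⟨G.ne_of_adj h, Or.inl h⟩, hlt, by omega⟩
      · exact ⟨⟨Fin.ne_of_lt (hN z hz), Or.inr (Or.inr ⟨rfl, hz⟩)⟩, hN z hz, by omega⟩
  have hdisj : Disjoint (univ.filter fun p : Fin n × Fin n =>
      G.Adj p.1 p.2 ∧ p.1 < p.2 ∧ (p.2 : ℕ) < v) (N.image fun z => (z, v)) := by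
    refine Finset.disjoint_left.mpr fun p hp hp' => ?_
    obtain ⟨z, -, rfl⟩ := mem_image.mp hp'
    exact lt_irrefl _ (mem_filter.mp hp).2.2.2
  rw [uncoverEdges, hsplit, card_union_of_disjoint hdisj,
    card_image_of_injective _ fun _ _ h => (Prod.mk.inj h).1, uncoverEdges]

end Uncover

section Stage

variable {n : ℕ}

structure IsUncoverForest (a : ℕ → ℕ) (i : ℕ) (G : SimpleGraph (Fin n)) : Prop where
  lt_of_adj : ∀ ⦃x y⦄, G.Adj x y → (x : ℕ) < i
  isAcyclic : G.IsAcyclic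
  uncoverEdges_eq : ∀ j, 1 ≤ j → j ≤ i → uncoverEdges G j = a j

/-- `card_add` (a forest on `i` vertices with `a i` edges has `i - a i` trees) follows from the
other fields; recording it spares counting the edges of forests. -/
structure IsStage (a : ℕ → ℕ) (i : ℕ) (G : SimpleGraph (Fin n)) (R : Finset (Fin n)) : Prop
    extends IsUncoverForest a i G where
  lt_of_mem : ∀ r ∈ R, (r : ℕ) < i
  isRootSet : G.IsRootSet {x | (x : ℕ) < i} R
  card_add : R.card + a i = i

noncomputable def stageSet (n : ℕ) (a : ℕ → ℕ) (i : ℕ) :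
    Finset (SimpleGraph (Fin n) × Finset (Fin n)) :=
  univ.filter fun GR => IsStage a i GR.1 GR.2

variable {a : ℕ → ℕ} {v : Fin n} {G : SimpleGraph (Fin n)} {R N : Finset (Fin n)}

@[simp]
lemma mem_stageSet {i : ℕ} {GR : SimpleGraph (Fin n) × Finset (Fin n)} :
    GR ∈ stageSet n a i ↔ IsStage a i GR.1 GR.2 := by
  simp [stageSet]

lemma isUncoverForest_addStar_iff (hv : 1 ≤ (v : ℕ)) (hG : ∀ ⦃x y⦄, G.Adj x y → (x : ℕ) < v)
    (hN : ∀ z ∈ N, (z : ℕ) < v) :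
    IsUncoverForest a (v + 1) (G.addStar v N) ↔
      IsUncoverForest a v G ∧ ((N : Set (Fin n)).Pairwise fun z₁ z₂ => ¬ G.Reachable z₁ z₂) ∧
        N.card + a v = a (v + 1) := by
  have hGv : ∀ y, ¬ G.Adj v y := fun _ h => (hG h).false
  have hvN : v ∉ N := fun h => (hN v h).false
  have hsucc := uncoverEdges_addStar_succ hG hN
  constructor
  · intro h
    obtain ⟨hacyclic, hsep⟩ := (isAcyclic_addStar_iff hGv hvN).mp h.isAcyclic
    have hseq : ∀ j : ℕ, 1 ≤ j → j ≤ v → uncoverEdges G j = a j := fun j h₁ h₂ => by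
      rw [← uncoverEdges_addStar_of_le h₂]
      exact h.uncoverEdges_eq j h₁ (by omega)
    refine ⟨⟨hG, hacyclic, hseq⟩, hsep, ?_⟩
    have := h.uncoverEdges_eq (v + 1) (by omega) le_rfl
    rw [hsucc, hseq v hv le_rfl] at this
    omega
  · rintro ⟨h, hsep, hcard⟩
    refine ⟨?_, (isAcyclic_addStar_iff hGv hvN).mpr ⟨h.isAcyclic, hsep⟩, fun j h₁ h₂ => ?_⟩
    · rintro x y ⟨-, hxy | ⟨rfl, -⟩ | ⟨-, hx⟩⟩
      · exact Nat.lt_succ_of_lt (hG hxy)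
      · exact Nat.lt_succ_self _
      · exact Nat.lt_succ_of_lt (hN x hx)
    rcases Nat.lt_or_ge j (v + 1) with hj | hj
    · rw [uncoverEdges_addStar_of_le (by omega)]
      exact h.uncoverEdges_eq j h₁ (by omega)
    · obtain rfl : j = v + 1 := by omega
      rw [hsucc, h.uncoverEdges_eq v hv le_rfl]
      omega

lemma stageSet_one (hn : 1 ≤ n) (ha₁ : a 1 = 0) :
    stageSet n a 1 = {(⊥, {⟨0, hn⟩})} := by
  have hzero : ∀ x : Fin n, (x : ℕ) < 1 → x = ⟨0, hn⟩ := fun x hx => Fin.ext (by simp; omega)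
  ext ⟨G, R⟩
  simp only [mem_stageSet, mem_singleton, Prod.mk.injEq]
  constructor
  · intro h
    refine ⟨?_, ?_⟩
    · ext x y
      simp only [bot_adj, iff_false]
      exact fun hxy => G.ne_of_adj hxy
        ((hzero x (h.lt_of_adj hxy)).trans (hzero y (h.lt_of_adj hxy.symm)).symm)
    · obtain ⟨r, rfl⟩ := card_eq_one.mp (by have := h.card_add; omega : R.card = 1)
      rw [hzero r (h.lt_of_mem r (mem_singleton_self r))]
  · rintro ⟨rfl, rfl⟩
    refine ⟨⟨by simp, isAcyclic_bot, fun j h₁ h₂ => ?_⟩, by simp, fun x hx => ?_, by simp [ha₁]⟩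
    · obtain rfl : j = 1 := by omega
      simp [uncoverEdges, ha₁]
    · obtain rfl := hzero x hx
      exact ⟨_, ⟨mem_singleton_self _, .rfl⟩, fun y hy => mem_singleton.mp hy.1⟩

lemma setOf_val_lt_succ (v : Fin n) :
    {x : Fin n | (x : ℕ) < v + 1} = insert v {x : Fin n | (x : ℕ) < v} := by
  ext x
  simp only [Set.mem_insert_iff, Set.mem_ofPred_eq, Fin.ext_iff]
  omega

end Stage

section Transitions

variable {n : ℕ} {a : ℕ → ℕ} {v : Fin n} {G : SimpleGraph (Fin n)} {R N : Finset (Fin n)}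

lemma IsUncoverForest.isolated (h : IsUncoverForest a v G) : ∀ y, ¬ G.Adj v y :=
  fun _ hy => (h.lt_of_adj hy).false

lemma IsStage.notMem (h : IsStage a v G R) : v ∉ R :=
  fun hv => (h.lt_of_mem v hv).false

lemma IsStage.isRootSet_insert {G' : SimpleGraph (Fin n)} (h : IsStage a (v + 1) G' R) :
    G'.IsRootSet (insert v {x | (x : ℕ) < v}) R :=
  setOf_val_lt_succ v ▸ h.isRootSet

lemma IsStage.addStar_root (h : IsStage a v G R) (hv : 1 ≤ (v : ℕ)) {P : Finset (Fin n)}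
    (hPR : P ⊆ R) (hP : P.card + a v = a (v + 1)) :
    IsStage a (v + 1) (G.addStar v P) (insert v (R \ P)) := by
  refine ⟨(isUncoverForest_addStar_iff hv h.lt_of_adj fun z hz => h.lt_of_mem z (hPR hz)).mpr
    ⟨h.toIsUncoverForest, (h.isRootSet.pairwise_not_reachable h.lt_of_mem).mono hPR, hP⟩,
    fun r hr => ?_, ?_, ?_⟩
  · rcases mem_insert.mp hr with rfl | hr
    · exact Nat.lt_succ_self _
    · exact Nat.lt_succ_of_lt (h.lt_of_mem r (mem_sdiff.mp hr).1)
  · rw [setOf_val_lt_succ]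
    exact h.isRootSet.addStar_root h.isolated (lt_irrefl (v : ℕ)) h.lt_of_mem hPR
  · rw [card_insert_of_notMem fun hvR => h.notMem (mem_sdiff.mp hvR).1, card_sdiff_of_subset hPR]
    have := card_le_card hPR
    have := h.card_add
    omega

lemma IsStage.addStar_nonRoot (h : IsStage a v G R) (hv : 1 ≤ (v : ℕ))
    {P : Finset (Fin n)} (hPR : P ⊆ R) {x₀ : Fin n} (hx₀ : (x₀ : ℕ) < v)
    (hx₀P : ∀ p ∈ P, ¬ G.Reachable x₀ p) (hP : P.card + 1 + a v = a (v + 1)) :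
    IsStage a (v + 1) (G.addStar v (insert x₀ P)) (R \ P) := by
  have hsep : ((insert x₀ P : Finset (Fin n)) : Set (Fin n)).Pairwise
      fun z₁ z₂ => ¬ G.Reachable z₁ z₂ := by
    rw [coe_insert, Set.pairwise_insert]
    exact ⟨(h.isRootSet.pairwise_not_reachable h.lt_of_mem).mono hPR,
      fun p hp _ => ⟨hx₀P p hp, fun hp' => hx₀P p hp hp'.symm⟩⟩
  have hN : ∀ z ∈ insert x₀ P, (z : ℕ) < v := by
    intro z hz
    rcases mem_insert.mp hz with rfl | hz
    exacts [hx₀, h.lt_of_mem z (hPR hz)]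
  refine ⟨(isUncoverForest_addStar_iff hv h.lt_of_adj hN).mpr ⟨h.toIsUncoverForest, hsep, ?_⟩,
    fun r hr => Nat.lt_succ_of_lt (h.lt_of_mem r (mem_sdiff.mp hr).1), ?_, ?_⟩
  · rw [card_insert_of_notMem fun hx => hx₀P x₀ hx .rfl]
    omega
  · rw [setOf_val_lt_succ]
    exact h.isRootSet.addStar_nonRoot h.isolated (lt_irrefl (v : ℕ))
      h.lt_of_mem hPR hx₀ hx₀P
  · rw [card_sdiff_of_subset hPR]
    have := card_le_card hPR
    have := h.card_add
    omega

lemma IsStage.of_addStar_root (h : IsStage a (v + 1) (G.addStar v N) R) (hv : 1 ≤ (v : ℕ))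
    (hG : ∀ ⦃x y⦄, G.Adj x y → (x : ℕ) < v) (hN : ∀ z ∈ N, (z : ℕ) < v) (hvR : v ∈ R) :
    IsStage a v G (R.erase v ∪ N) := by
  have hvN : v ∉ N := fun hvN => (hN v hvN).false
  obtain ⟨hF, hsep, hcard⟩ := (isUncoverForest_addStar_iff hv hG hN).mp h.toIsUncoverForest
  refine ⟨hF, fun r hr => ?_,
    h.isRootSet_insert.of_addStar_root hF.isolated hvN (lt_irrefl (v : ℕ)) hsep hvR, ?_⟩
  · rcases mem_union.mp hr with hr | hr
    · have := h.lt_of_mem r (mem_of_mem_erase hr)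
      have := Fin.val_ne_of_ne (ne_of_mem_erase hr)
      omega
    · exact hN r hr
  · have hdisj := h.isRootSet_insert.disjoint_of_addStar_root hvN
      (fun z hz => Set.mem_insert_of_mem _ (hN z hz)) hvR
    rw [card_union_of_disjoint (disjoint_of_subset_left (erase_subset v R) hdisj),
      card_erase_of_mem hvR]
    have := h.card_add
    have := card_pos.mpr ⟨v, hvR⟩
    omega

lemma IsStage.of_addStar_nonRoot (h : IsStage a (v + 1) (G.addStar v N) R)
    (hv : 1 ≤ (v : ℕ)) (hG : ∀ ⦃x y⦄, G.Adj x y → (x : ℕ) < v) (hN : ∀ z ∈ N, (z : ℕ) < v)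
    (hvR : v ∉ R) {r₀ x₀ : Fin n} (hr₀ : r₀ ∈ R) (hx₀ : x₀ ∈ N) (hr₀x₀ : G.Reachable r₀ x₀) :
    IsStage a v G (R ∪ N.erase x₀) := by
  have hvN : v ∉ N := fun hvN => (hN v hvN).false
  obtain ⟨hF, hsep, hcard⟩ := (isUncoverForest_addStar_iff hv hG hN).mp h.toIsUncoverForest
  refine ⟨hF, fun r hr => ?_, h.isRootSet_insert.of_addStar_nonRoot hF.isolated hvN
    (lt_irrefl (v : ℕ)) hsep hr₀ hx₀ hr₀x₀, ?_⟩
  · rcases mem_union.mp hr with hr | hr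
    · have := h.lt_of_mem r hr
      have := Fin.val_ne_of_ne (ne_of_mem_of_not_mem hr hvR)
      omega
    · exact hN r (mem_of_mem_erase hr)
  · have hdisj := h.isRootSet_insert.disjoint_erase_of_addStar_nonRoot hvN hsep (Set.mem_insert _ _)
      hr₀ hx₀ hr₀x₀
    rw [card_union_of_disjoint hdisj, card_erase_of_mem hx₀]
    have := h.card_add
    have := card_pos.mpr ⟨x₀, hx₀⟩
    omega

lemma exists_addStar_eq {T : SimpleGraph (Fin n)} (hT : ∀ ⦃x y⦄, T.Adj x y → (x : ℕ) < v + 1) :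
    ∃ (G : SimpleGraph (Fin n)) (N : Finset (Fin n)), (∀ ⦃x y⦄, G.Adj x y → (x : ℕ) < v) ∧
      (∀ z ∈ N, (z : ℕ) < v) ∧ G.addStar v N = T := by
  refine ⟨restrictBelow T v, univ.filter (T.Adj v), fun x y h => h.2.1, fun z hz => ?_, ?_⟩
  · have hvz := (mem_filter.mp hz).2
    have := hT hvz.symm
    have := Fin.val_ne_of_ne (T.ne_of_adj hvz).symm
    omega
  · ext x y
    simp only [addStar_adj, restrictBelow, mem_filter, mem_univ, true_and]
    constructor
    · rintro ⟨-, ⟨h, -⟩ | ⟨rfl, h⟩ | ⟨rfl, h⟩⟩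
      exacts [h, h, h.symm]
    · intro h
      refine ⟨T.ne_of_adj h, ?_⟩
      by_cases hxv : x = v
      · exact Or.inr (Or.inl ⟨hxv, hxv ▸ h⟩)
      by_cases hyv : y = v
      · exact Or.inr (Or.inr ⟨hyv, hyv ▸ h.symm⟩)
      have := hT h
      have := hT h.symm
      have := Fin.val_ne_of_ne hxv
      have := Fin.val_ne_of_ne hyv
      exact Or.inl ⟨h, by omega, by omega⟩

end Transitions

lemma card_powerset_filter_card_eq {α : Type*} (s : Finset α) (j : ℤ) :
    (s.powerset.filter fun P => (P.card : ℤ) = j).card = chooseZ s.card j := by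
  unfold chooseZ
  split_ifs with hj
  · rw [← card_powersetCard, powersetCard_eq_filter]
    exact congrArg card (filter_congr fun P _ => by omega)
  · rw [card_eq_zero, filter_eq_empty_iff]
    intro P _
    omega

lemma chooseZ_natCast (m k : ℕ) : chooseZ m k = m.choose k := by
  simp [chooseZ]

lemma chooseZ_succ (m : ℕ) (j : ℤ) : chooseZ (m + 1) j = chooseZ m (j - 1) + chooseZ m j := by
  unfold chooseZ
  rcases lt_trichotomy j 0 with hj | rfl | hj
  · rw [if_neg (by omega), if_neg (by omega), if_neg (by omega)]
  · simp
  · obtain ⟨k, rfl⟩ : ∃ k : ℕ, j = k + 1 := ⟨j.toNat - 1, by omega⟩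
    rw [if_pos hj.le, if_pos (by omega), if_pos hj.le, show ((k : ℤ) + 1).toNat = k + 1 by omega,
      show ((k : ℤ) + 1 - 1).toNat = k by omega, Nat.choose_succ_succ]

section Counting

variable {n : ℕ} (a : ℕ → ℕ) (v : Fin n)

/-- Ways to uncover `v` as a new root: a stage on the first `v` vertices and the set `P` of its
roots that become children of `v`. -/
noncomputable def rootChoices :
    Finset (Σ _ : SimpleGraph (Fin n) × Finset (Fin n), Finset (Fin n)) :=
  (stageSet n a v).sigma fun GR =>
    GR.2.powerset.filter fun P => (P.card : ℤ) = a (v + 1) - a v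

/-- Ways to uncover `v` as a child of an old vertex `x₀`: a stage, the vertex `x₀`, and the set
`P` of roots of other trees that become children of `v`. -/
noncomputable def nonRootChoices :
    Finset (Σ _ : SimpleGraph (Fin n) × Finset (Fin n), Σ _ : Fin n, Finset (Fin n)) :=
  (stageSet n a v).sigma fun GR => (univ.filter fun x : Fin n => (x : ℕ) < v).sigma fun x =>
    (GR.2.filter fun r => ¬ GR.1.Reachable x r).powerset.filter
      fun P => (P.card : ℤ) = a (v + 1) - a v - 1

def attachRoot (p : Σ _ : SimpleGraph (Fin n) × Finset (Fin n), Finset (Fin n)) :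
    SimpleGraph (Fin n) × Finset (Fin n) :=
  (p.1.1.addStar v p.2, insert v (p.1.2 \ p.2))

def attachNonRoot (p : Σ _ : SimpleGraph (Fin n) × Finset (Fin n), Σ _ : Fin n, Finset (Fin n)) :
    SimpleGraph (Fin n) × Finset (Fin n) :=
  (p.1.1.addStar v (insert p.2.1 p.2.2), p.1.2 \ p.2.2)

lemma card_rootChoices :
    (rootChoices a v).card =
      (stageSet n a v).card * chooseZ (v - a v) ((a (v + 1) : ℤ) - a v) := by
  rw [rootChoices, card_sigma, sum_const_nat fun GR hGR => ?_]
  rw [card_powerset_filter_card_eq]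
  have := (mem_stageSet.mp hGR).card_add
  congr 1
  omega

lemma card_nonRootChoices :
    (nonRootChoices a v).card = (stageSet n a v).card *
      (v * chooseZ (v - a v - 1) ((a (v + 1) : ℤ) - a v - 1)) := by
  rw [nonRootChoices, card_sigma, sum_const_nat fun GR hGR => ?_]
  rw [card_sigma, sum_const_nat fun x hx => ?_, Fin.card_filter_val_lt, min_eq_right v.isLt.le]
  have h := mem_stageSet.mp hGR
  rw [card_powerset_filter_card_eq, h.isRootSet.card_filter_not_reachable (mem_filter.mp hx).2]
  have := h.card_add
  congr 1
  omega

variable {a v}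

@[simp]
lemma mem_rootChoices {p : Σ _ : SimpleGraph (Fin n) × Finset (Fin n), Finset (Fin n)} :
    p ∈ rootChoices a v ↔
      IsStage a v p.1.1 p.1.2 ∧ p.2 ⊆ p.1.2 ∧ (p.2.card : ℤ) = a (v + 1) - a v := by
  simp [rootChoices]

@[simp]
lemma mem_nonRootChoices
    {p : Σ _ : SimpleGraph (Fin n) × Finset (Fin n), Σ _ : Fin n, Finset (Fin n)} :
    p ∈ nonRootChoices a v ↔ IsStage a v p.1.1 p.1.2 ∧ (p.2.1 : ℕ) < v ∧
      (∀ ⦃r⦄, r ∈ p.2.2 → r ∈ p.1.2 ∧ ¬ p.1.1.Reachable p.2.1 r) ∧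
      (p.2.2.card : ℤ) = a (v + 1) - a v - 1 := by
  simp [nonRootChoices, subset_iff]

lemma attachRoot_mem (hv : 1 ≤ (v : ℕ)) {p} (hp : p ∈ rootChoices a v) :
    attachRoot v p ∈ (stageSet n a (v + 1)).filter fun GR => v ∈ GR.2 := by
  obtain ⟨h, hPR, hcard⟩ := mem_rootChoices.mp hp
  exact mem_filter.mpr ⟨mem_stageSet.mpr (h.addStar_root hv hPR (by omega)), mem_insert_self _ _⟩

lemma injOn_attachRoot : Set.InjOn (attachRoot v) (rootChoices a v) := by
  rintro ⟨⟨G₁, R₁⟩, P₁⟩ h₁ ⟨⟨G₂, R₂⟩, P₂⟩ h₂ heq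
  simp only [mem_coe, mem_rootChoices] at h₁ h₂
  obtain ⟨h₁, hP₁, -⟩ := h₁
  obtain ⟨h₂, hP₂, -⟩ := h₂
  simp only [attachRoot, Prod.mk.injEq] at heq
  obtain ⟨hG, hR⟩ := heq
  obtain ⟨rfl, rfl⟩ := (addStar_eq_addStar_iff h₁.isolated h₂.isolated
    (fun hv => h₁.notMem (hP₁ hv)) (fun hv => h₂.notMem (hP₂ hv))).mp hG
  have := congrArg (·.erase v) hR
  simp only [erase_insert fun hv => h₁.notMem (Finset.mem_sdiff.mp hv).1,
    erase_insert fun hv => h₂.notMem (Finset.mem_sdiff.mp hv).1] at this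
  rw [← sdiff_union_of_subset hP₁, this, sdiff_union_of_subset hP₂]

lemma surjOn_attachRoot (hv : 1 ≤ (v : ℕ)) :
    Set.SurjOn (attachRoot v) (rootChoices a v)
      ((stageSet n a (v + 1)).filter fun GR => v ∈ GR.2) := by
  rintro ⟨G', R'⟩ h
  obtain ⟨h, hvR⟩ := mem_filter.mp (mem_coe.mp h)
  rw [mem_stageSet] at h
  obtain ⟨G, N, hG, hN, rfl⟩ := exists_addStar_eq h.lt_of_adj
  have hvN : v ∉ N := fun hvN => (hN v hvN).false
  have hcard := ((isUncoverForest_addStar_iff hv hG hN).mp h.toIsUncoverForest).2.2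
  have hdisj := h.isRootSet_insert.disjoint_of_addStar_root hvN
    (fun z hz => Set.mem_insert_of_mem _ (hN z hz)) hvR
  refine ⟨⟨(G, R'.erase v ∪ N), N⟩, mem_rootChoices.mpr
    ⟨h.of_addStar_root hv hG hN hvR, subset_union_right, by dsimp only; omega⟩, ?_⟩
  simp only [attachRoot,
    union_sdiff_cancel_right (disjoint_of_subset_left (erase_subset v R') hdisj), insert_erase hvR]

lemma attachNonRoot_mem (hv : 1 ≤ (v : ℕ)) {p} (hp : p ∈ nonRootChoices a v) :
    attachNonRoot v p ∈ (stageSet n a (v + 1)).filter fun GR => v ∉ GR.2 := by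
  obtain ⟨h, hx₀, hP, hcard⟩ := mem_nonRootChoices.mp hp
  exact mem_filter.mpr ⟨mem_stageSet.mpr (h.addStar_nonRoot hv (fun p hp => (hP hp).1) hx₀
    (fun p hp => (hP hp).2) (by omega)), fun hvR => h.notMem (Finset.mem_sdiff.mp hvR).1⟩

lemma injOn_attachNonRoot : Set.InjOn (attachNonRoot v) (nonRootChoices a v) := by
  rintro ⟨⟨G₁, R₁⟩, x₁, P₁⟩ h₁ ⟨⟨G₂, R₂⟩, x₂, P₂⟩ h₂ heq
  simp only [mem_coe, mem_nonRootChoices] at h₁ h₂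
  obtain ⟨h₁, hx₁, hP₁, -⟩ := h₁
  obtain ⟨h₂, hx₂, hP₂, -⟩ := h₂
  simp only [attachNonRoot, Prod.mk.injEq] at heq
  obtain ⟨hG, hR⟩ := heq
  have hvN : ∀ {G R P} {x : Fin n}, IsStage a v G R → (x : ℕ) < v → P ⊆ R →
      v ∉ insert x P := fun h hx hPR hvN =>
    (mem_insert.mp hvN).elim (fun hvx => (hvx ▸ hx).false) fun hvP => h.notMem (hPR hvP)
  obtain ⟨rfl, hins⟩ := (addStar_eq_addStar_iff h₁.isolated h₂.isolated
    (hvN h₁ hx₁ fun p hp => (hP₁ hp).1) (hvN h₂ hx₂ fun p hp => (hP₂ hp).1)).mp hG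
  obtain rfl : x₁ = x₂ := h₁.isRootSet.eq_of_insert_eq_of_sdiff_eq h₂.isRootSet
    (fun p hp => (hP₁ hp).1) hx₂ (fun p hp => (hP₂ hp).2) hins hR
  obtain rfl : P₁ = P₂ := by
    rw [← erase_insert fun hx => (hP₁ hx).2 .rfl, hins, erase_insert fun hx => (hP₂ hx).2 .rfl]
  obtain rfl : R₁ = R₂ := by
    rw [← sdiff_union_of_subset fun p hp => (hP₁ hp).1, hR,
      sdiff_union_of_subset fun p hp => (hP₂ hp).1]
  rfl

lemma surjOn_attachNonRoot (hv : 1 ≤ (v : ℕ)) :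
    Set.SurjOn (attachNonRoot v) (nonRootChoices a v)
      ((stageSet n a (v + 1)).filter fun GR => v ∉ GR.2) := by
  rintro ⟨G', R'⟩ h
  obtain ⟨h, hvR⟩ := mem_filter.mp (mem_coe.mp h)
  rw [mem_stageSet] at h
  obtain ⟨G, N, hG, hN, rfl⟩ := exists_addStar_eq h.lt_of_adj
  have hvN : v ∉ N := fun hvN => (hN v hvN).false
  obtain ⟨hF, hsep, hcard⟩ := (isUncoverForest_addStar_iff hv hG hN).mp h.toIsUncoverForest
  -- `x₀` is the neighbour of `v` through which `v` reaches its root `r₀`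
  obtain ⟨r₀, ⟨hr₀, hvr₀⟩, -⟩ := h.isRootSet v (Nat.lt_succ_self _)
  obtain ⟨x₀, hx₀, hr₀x₀⟩ := (reachable_addStar_center_iff hF.isolated hvN
    (ne_of_mem_of_not_mem hr₀ hvR)).mp hvr₀.symm
  have hdisj := h.isRootSet_insert.disjoint_erase_of_addStar_nonRoot hvN hsep (Set.mem_insert _ _)
    hr₀ hx₀ hr₀x₀
  refine ⟨⟨(G, R' ∪ N.erase x₀), x₀, N.erase x₀⟩, mem_nonRootChoices.mpr
    ⟨h.of_addStar_nonRoot hv hG hN hvR hr₀ hx₀ hr₀x₀, hN x₀ hx₀,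
      fun z hz => ⟨mem_union_right _ hz, fun hx₀z => (mem_erase.mp hz).1
        (hsep.eq (mem_erase.mp hz).2 hx₀ (not_not_intro hx₀z.symm))⟩, ?_⟩, ?_⟩
  · rw [card_erase_of_mem hx₀]
    have := card_pos.mpr ⟨x₀, hx₀⟩
    omega
  · simp only [attachNonRoot, insert_erase hx₀, union_sdiff_cancel_right hdisj]

variable (a)

lemma card_filter_mem_stageSet_succ (hv : 1 ≤ (v : ℕ)) :
    ((stageSet n a (v + 1)).filter fun GR => v ∈ GR.2).card =
      (stageSet n a v).card * chooseZ (v - a v) ((a (v + 1) : ℤ) - a v) := by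
  rw [← card_rootChoices, card_nbij (attachRoot v) (fun _ hp => attachRoot_mem hv hp)
    injOn_attachRoot (surjOn_attachRoot hv)]

lemma card_filter_notMem_stageSet_succ (hv : 1 ≤ (v : ℕ)) :
    ((stageSet n a (v + 1)).filter fun GR => v ∉ GR.2).card =
      (stageSet n a v).card * (v * chooseZ (v - a v - 1) ((a (v + 1) : ℤ) - a v - 1)) := by
  rw [← card_nonRootChoices, card_nbij (attachNonRoot v) (fun _ hp => attachNonRoot_mem hv hp)
    injOn_attachNonRoot (surjOn_attachNonRoot hv)]

end Counting

section Assembly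

variable {n : ℕ} (a : ℕ → ℕ)

lemma card_stageSet_succ {v : Fin n} (hv : 1 ≤ (v : ℕ)) :
    (stageSet n a (v + 1)).card = (stageSet n a v).card *
      (chooseZ (v - a v) ((a (v + 1) : ℤ) - a v) +
        v * chooseZ (v - a v - 1) ((a (v + 1) : ℤ) - a v - 1)) := by
  rw [← card_filter_add_card_filter_not (s := stageSet n a (v + 1)) (fun GR => v ∈ GR.2),
    card_filter_mem_stageSet_succ a hv, card_filter_notMem_stageSet_succ a hv, mul_add]

lemma card_stageSet_eq_prod (ha₁ : a 1 = 0) {k : ℕ} (hk : 1 ≤ k) (hkn : k < n) :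
    (stageSet n a k).card = ∏ i ∈ Icc 1 (k - 1),
      (chooseZ (i - a i) ((a (i + 1) : ℤ) - a i) +
        i * chooseZ (i - a i - 1) ((a (i + 1) : ℤ) - a i - 1)) := by
  induction k, hk using Nat.le_induction with
  | base => simp [stageSet_one (by omega : 1 ≤ n) ha₁]
  | succ k hk ih =>
    rw [show (stageSet n a (k + 1)).card = _ from card_stageSet_succ a (v := ⟨k, by omega⟩) hk,
      ih (by omega), Nat.add_sub_cancel]
    conv_rhs => rw [← Nat.sub_add_cancel hk, prod_Icc_succ_top (by omega), Nat.sub_add_cancel hk]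

lemma IsStage.eq_singleton {v : Fin n} {T : SimpleGraph (Fin n)} {R : Finset (Fin n)}
    (h : IsStage a n T R) (han : a n + 1 = n) (hv : v ∈ R) : R = {v} := by
  obtain ⟨r, rfl⟩ := card_eq_one.mp (by have := h.card_add; omega : R.card = 1)
  rw [mem_singleton.mp hv]

lemma isStage_singleton_iff {v : Fin n} {T : SimpleGraph (Fin n)} (han : a n + 1 = n) :
    IsStage a n T {v} ↔ T.IsTree ∧ ∀ i, 1 ≤ i → i ≤ n → uncoverEdges T i = a i := by
  constructor
  · intro h
    refine ⟨⟨(connected_iff_exists_forall_reachable T).mpr ⟨v, fun w => ?_⟩, h.isAcyclic⟩,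
      h.uncoverEdges_eq⟩
    obtain ⟨r, ⟨hr, hwr⟩, -⟩ := h.isRootSet w w.isLt
    exact (mem_singleton.mp hr ▸ hwr).symm
  · rintro ⟨hT, hseq⟩
    refine ⟨⟨fun x _ _ => x.isLt, hT.isAcyclic, hseq⟩, by simp, fun x _ => ?_, by simp; omega⟩
    exact ⟨v, ⟨mem_singleton_self v, hT.connected.preconnected x v⟩,
      fun y hy => mem_singleton.mp hy.1⟩

lemma card_treeSet_filter_eq {m : ℕ} (hm : 1 ≤ m) (han : a (m + 1) = m) (ham : a m ≤ m) :
    ((treeSet (m + 1)).filter fun T =>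
        ∀ i, 1 ≤ i → i ≤ m + 1 → uncoverEdges T i = a i).card =
      (stageSet (m + 1) a m).card := by
  have hroot := card_filter_mem_stageSet_succ a (v := Fin.last m) hm
  simp only [Fin.val_last, han, ← Nat.cast_sub ham, chooseZ_natCast, Nat.choose_self,
    mul_one] at hroot
  rw [← hroot]
  refine card_nbij' (fun T => (T, {Fin.last m})) Prod.fst ?_ ?_ (fun _ _ => rfl) ?_
  · intro T hT
    simp only [treeSet, coe_filter, mem_filter, mem_univ, true_and, Set.mem_ofPred_eq] at hT
    simp only [coe_filter, Set.mem_ofPred_eq, mem_stageSet, mem_singleton_self, and_true]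
    exact (isStage_singleton_iff a (by omega)).mpr hT
  · rintro ⟨T, R⟩ h
    simp only [coe_filter, Set.mem_ofPred_eq, mem_stageSet] at h
    obtain rfl := h.1.eq_singleton a (by omega) h.2
    simpa [treeSet] using (isStage_singleton_iff a (by omega)).mp h.1
  · rintro ⟨T, R⟩ h
    simp only [coe_filter, Set.mem_ofPred_eq, mem_stageSet] at h
    rw [h.1.eq_singleton a (by omega) h.2]

end Assembly

/-- The number of labeled trees on `n` vertices with fully specified uncover sequence
`(a_1, …, a_n)` equals
`∏_{i=1}^{n-2} (C(i - a_i - 1, a_{i+1} - a_i - 1)·(i+1) + C(i - a_i - 1, a_{i+1} - a_i))`. -/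
theorem full_uncover_sequence_count (n : ℕ) (hn : 2 ≤ n) (a : ℕ → ℕ)
    (hmono : ∀ i j, 1 ≤ i → i ≤ j → j ≤ n → a i ≤ a j)
    (ha1 : a 1 = 0) (han : a n = n - 1)
    (hle : ∀ i, 1 ≤ i → i ≤ n → a i ≤ i - 1) :
    ((treeSet n).filter fun T => ∀ i, 1 ≤ i → i ≤ n → uncoverEdges T i = a i).card
      = ∏ i ∈ Finset.Icc 1 (n - 2),
          (chooseZ (i - a i - 1) ((a (i + 1) : ℤ) - (a i : ℤ) - 1) * (i + 1)
            + (i - a i - 1).choose (a (i + 1) - a i)) := by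
  obtain ⟨m, rfl⟩ : ∃ m, n = m + 1 := ⟨n - 1, by omega⟩
  have ham := hle m (by omega) (by omega)
  rw [card_treeSet_filter_eq a (by omega) (by omega) (by omega),
    card_stageSet_eq_prod a ha1 (by omega) (by omega), show m + 1 - 2 = m - 1 by omega]
  refine prod_congr rfl fun i hi => ?_
  obtain ⟨hi₁, hi₂⟩ := mem_Icc.mp hi
  obtain ⟨k, hk⟩ : ∃ k, i - a i = k + 1 := ⟨i - a i - 1, by have := hle i hi₁ (by omega); omega⟩
  rw [hk, Nat.add_sub_cancel, chooseZ_succ, ← chooseZ_natCast,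
    Nat.cast_sub (hmono i (i + 1) hi₁ (by omega) (by omega))]
  ring
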